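/- arXiv:2401.11429 — 2 statements merged into one kernel-verified Lean document; each statement's English description precedes it below -/
import Mathlib

section
/- Von Neumann's trace inequality: for any n×n complex matrices A and B with singular values σ₁(A) ≥ ⋯ ≥ σₙ(A) and σ₁(B) ≥ ⋯ ≥ σₙ(B), we have |tr(A B)| ≤ Σ_{i=1}^n σᵢ(A) σᵢ(B). -/
open scoped ComplexOrder

/-- The (unsorted) singular values of a complex square matrix: square roots of the
eigenvalues of `Aᴴ * A`. -/
noncomputable def singularValues {n : ℕ} (A : Matrix (Fin n) (Fin n) ℂ) : Fin n → ℝ :=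
  fun i => Real.sqrt ((Matrix.posSemidef_conjTranspose_mul_self A).1.eigenvalues i)

/-- `σ` is the decreasingly sorted sequence of singular values of `A`. -/
def IsSortedSingularValues {n : ℕ} (A : Matrix (Fin n) (Fin n) ℂ) (σ : Fin n → ℝ) : Prop :=
  Antitone σ ∧ ∃ e : Equiv.Perm (Fin n), ∀ i, σ i = singularValues A (e i)


open Matrix Finset

section Helpers

lemma card_le_filter {n k : ℕ} (hk : k < n) :
    ((Finset.univ.filter fun i : Fin n => (i : ℕ) ≤ k).card) = k + 1 := by
  rw [← Finset.card_image_of_injective _ Fin.val_injective]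
  have : (Finset.univ.filter fun i : Fin n => (i : ℕ) ≤ k).image Fin.val
      = Finset.range (k+1) := by
    ext m
    simp only [Finset.mem_image, Finset.mem_filter, Finset.mem_univ, true_and,
      Finset.mem_range]
    constructor
    · rintro ⟨i, hi, rfl⟩; omega
    · intro hm; exact ⟨⟨m, by omega⟩, by simp; omega, rfl⟩
  rw [this, Finset.card_range]

/-- Abel expansion of a weighted double sum. -/
lemma abel_expand {n : ℕ} (σ γ : Fin n → ℝ) (F : Fin n → Fin n → ℝ)
    (α β : ℕ → ℝ)
    (hσ : ∀ i : Fin n, σ i = ∑ k ∈ Finset.range n, if (i : ℕ) ≤ k then α k else 0)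
    (hγ : ∀ j : Fin n, γ j = ∑ l ∈ Finset.range n, if (j : ℕ) ≤ l then β l else 0) :
    ∑ i : Fin n, ∑ j : Fin n, σ i * γ j * F i j =
      ∑ k ∈ Finset.range n, ∑ l ∈ Finset.range n,
        α k * β l * (∑ i : Fin n, ∑ j : Fin n,
          if (i : ℕ) ≤ k ∧ (j : ℕ) ≤ l then F i j else 0) := by
  have key : ∀ (i j : Fin n) (k l : ℕ),
      (if (i : ℕ) ≤ k then α k else 0) * (if (j : ℕ) ≤ l then β l else 0) * F i j =
      α k * β l * (if (i : ℕ) ≤ k ∧ (j : ℕ) ≤ l then F i j else 0) := by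
    intro i j k l
    by_cases h1 : (i : ℕ) ≤ k <;> by_cases h2 : (j : ℕ) ≤ l <;>
      simp [h1, h2] <;> ring
  calc ∑ i : Fin n, ∑ j : Fin n, σ i * γ j * F i j
      = ∑ i : Fin n, ∑ j : Fin n, ∑ k ∈ Finset.range n, ∑ l ∈ Finset.range n,
          (if (i : ℕ) ≤ k then α k else 0) * (if (j : ℕ) ≤ l then β l else 0) * F i j := by
        refine Finset.sum_congr rfl fun i _ => Finset.sum_congr rfl fun j _ => ?_
        rw [hσ, hγ, Finset.sum_mul_sum, Finset.sum_mul]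
        exact Finset.sum_congr rfl fun k _ => by rw [Finset.sum_mul]
    _ = ∑ i : Fin n, ∑ k ∈ Finset.range n, ∑ l ∈ Finset.range n, ∑ j : Fin n,
          (if (i : ℕ) ≤ k then α k else 0) * (if (j : ℕ) ≤ l then β l else 0) * F i j := by
        refine Finset.sum_congr rfl fun i _ => ?_
        rw [Finset.sum_comm]
        exact Finset.sum_congr rfl fun k _ => Finset.sum_comm
    _ = ∑ k ∈ Finset.range n, ∑ i : Fin n, ∑ l ∈ Finset.range n, ∑ j : Fin n,
          (if (i : ℕ) ≤ k then α k else 0) * (if (j : ℕ) ≤ l then β l else 0) * F i j :=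
        Finset.sum_comm
    _ = ∑ k ∈ Finset.range n, ∑ l ∈ Finset.range n, ∑ i : Fin n, ∑ j : Fin n,
          (if (i : ℕ) ≤ k then α k else 0) * (if (j : ℕ) ≤ l then β l else 0) * F i j :=
        Finset.sum_congr rfl fun k _ => Finset.sum_comm
    _ = _ := by
        refine Finset.sum_congr rfl fun k _ => Finset.sum_congr rfl fun l _ => ?_
        rw [Finset.mul_sum]
        refine Finset.sum_congr rfl fun i _ => ?_
        rw [Finset.mul_sum]
        exact Finset.sum_congr rfl fun j _ => key i j k l

/-- Representation of an antitone nonnegative sequence via its decrements. -/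
lemma antitone_repr {n : ℕ} (σ : Fin n → ℝ) (hanti : Antitone σ)
    (hpos : ∀ i, 0 ≤ σ i) :
    ∃ α : ℕ → ℝ, (∀ k, 0 ≤ α k) ∧
      ∀ i : Fin n, σ i = ∑ k ∈ Finset.range n, if (i : ℕ) ≤ k then α k else 0 := by
  set σ' : ℕ → ℝ := fun m => if h : m < n then σ ⟨m, h⟩ else 0 with hσ'
  refine ⟨fun k => σ' k - σ' (k+1), ?_, ?_⟩
  · intro k
    simp only [sub_nonneg, σ']
    split_ifs <;>
      first
        | exact hanti (by simp [Fin.le_def])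
        | exact hpos _
        | exact le_refl 0
        | omega
  · intro i
    have h1 : ∑ k ∈ Finset.range n, (if (i : ℕ) ≤ k then σ' k - σ' (k+1) else 0)
        = ∑ k ∈ Finset.Ico (i : ℕ) n, (σ' k - σ' (k+1)) := by
      rw [← Finset.sum_filter]
      congr 1
      ext m
      simp [Finset.mem_filter, Finset.mem_range, Finset.mem_Ico, and_comm]
    rw [h1]
    have h2 : ∑ k ∈ Finset.Ico (i : ℕ) n, (σ' k - σ' (k+1)) = σ' i - σ' n := by
      have := Finset.sum_Ico_eq_sub (fun k => -σ' k) (le_of_lt i.2)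
      have t1 : ∀ m : ℕ, ∑ k ∈ Finset.range m, (σ' k - σ' (k+1)) = σ' 0 - σ' m :=
        fun m => Finset.sum_range_sub' σ' m
      rw [Finset.sum_Ico_eq_sub _ (le_of_lt i.2), t1, t1]
      ring
    rw [h2]
    simp only [σ']
    rw [dif_pos i.2, dif_neg (lt_irrefl n)]
    simp

lemma filter_le_card {n k : ℕ} (hk : k < n) :
    ∑ i : Fin n, (if (i:ℕ) ≤ k then (1:ℝ) else 0) = k + 1 := by
  rw [← Finset.sum_filter]
  simp only [Finset.sum_const, nsmul_eq_mul, mul_one]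
  rw [card_le_filter hk]
  push_cast; ring

lemma ds_bound {n : ℕ} (σ γ : Fin n → ℝ) (hσa : Antitone σ) (hγa : Antitone γ)
    (hσ0 : ∀ i, 0 ≤ σ i) (hγ0 : ∀ i, 0 ≤ γ i)
    (d : Fin n → Fin n → ℝ) (hd0 : ∀ i j, 0 ≤ d i j)
    (hrow : ∀ i, ∑ j : Fin n, d i j ≤ 1) (hcol : ∀ j, ∑ i : Fin n, d i j ≤ 1) :
    ∑ i : Fin n, ∑ j : Fin n, σ i * γ j * d i j ≤ ∑ i : Fin n, σ i * γ i := by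
  obtain ⟨α, hα0, hα⟩ := antitone_repr σ hσa hσ0
  obtain ⟨β, hβ0, hβ⟩ := antitone_repr γ hγa hγ0
  have hrhs : ∑ i : Fin n, σ i * γ i =
      ∑ i : Fin n, ∑ j : Fin n, σ i * γ j * (if i = j then (1:ℝ) else 0) := by
    refine Finset.sum_congr rfl fun i _ => ?_
    rw [Finset.sum_congr rfl (fun j _ => by rw [mul_ite, mul_one, mul_zero])]
    rw [Finset.sum_ite_eq (Finset.univ) i (fun j => σ i * γ j)]
    simp
  rw [hrhs, abel_expand σ γ d α β hα hβ,
    abel_expand σ γ (fun i j => if i = j then (1:ℝ) else 0) α β hα hβ]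
  refine Finset.sum_le_sum fun k hk => Finset.sum_le_sum fun l hl => ?_
  rw [Finset.mem_range] at hk hl
  have hTe : (∑ i : Fin n, ∑ j : Fin n,
      if (i : ℕ) ≤ k ∧ (j : ℕ) ≤ l then (if i = j then (1:ℝ) else 0) else 0)
      = min k l + 1 := by
    have inner : ∀ i : Fin n, (∑ j : Fin n,
        if (i : ℕ) ≤ k ∧ (j : ℕ) ≤ l then (if i = j then (1:ℝ) else 0) else 0)
        = if (i : ℕ) ≤ min k l then (1:ℝ) else 0 := by
      intro i
      have : ∀ j : Fin n,
          (if (i : ℕ) ≤ k ∧ (j : ℕ) ≤ l then (if i = j then (1:ℝ) else 0) else 0)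
          = if i = j then (if (i : ℕ) ≤ min k l then (1:ℝ) else 0) else 0 := by
        intro j
        by_cases hij : i = j
        · subst hij
          by_cases h1 : (i:ℕ) ≤ k <;> by_cases h2 : (i:ℕ) ≤ l <;>
            simp [h1, h2, le_min_iff]
        · simp [hij]
      rw [Finset.sum_congr rfl fun j _ => this j,
        Finset.sum_ite_eq (Finset.univ) i]
      simp
    rw [Finset.sum_congr rfl fun i _ => inner i]
    exact filter_le_card (by omega)
  have hTd : (∑ i : Fin n, ∑ j : Fin n,
      if (i : ℕ) ≤ k ∧ (j : ℕ) ≤ l then d i j else 0) ≤ min k l + 1 := by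
    rcases le_total k l with h | h
    · -- bound by k+1 via rows
      have : (∑ i : Fin n, ∑ j : Fin n,
          if (i : ℕ) ≤ k ∧ (j : ℕ) ≤ l then d i j else 0)
          ≤ ∑ i : Fin n, (if (i:ℕ) ≤ k then (1:ℝ) else 0) := by
        refine Finset.sum_le_sum fun i _ => ?_
        by_cases h1 : (i:ℕ) ≤ k
        · simp only [h1, if_true, true_and]
          calc (∑ j : Fin n, if (j : ℕ) ≤ l then d i j else 0)
              ≤ ∑ j : Fin n, d i j :=
                Finset.sum_le_sum fun j _ => by
                  by_cases h2 : (j:ℕ) ≤ l <;> simp [h2, hd0]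
            _ ≤ 1 := hrow i
        · simp [h1]
      rw [filter_le_card hk] at this
      calc _ ≤ (k:ℝ) + 1 := this
        _ ≤ min k l + 1 := by simp [min_eq_left h]
    · -- bound by l+1 via columns
      have : (∑ i : Fin n, ∑ j : Fin n,
          if (i : ℕ) ≤ k ∧ (j : ℕ) ≤ l then d i j else 0)
          ≤ ∑ j : Fin n, (if (j:ℕ) ≤ l then (1:ℝ) else 0) := by
        rw [Finset.sum_comm]
        refine Finset.sum_le_sum fun j _ => ?_
        by_cases h2 : (j:ℕ) ≤ l
        · simp only [h2, if_true, and_true]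
          calc (∑ i : Fin n, if (i : ℕ) ≤ k then d i j else 0)
              ≤ ∑ i : Fin n, d i j :=
                Finset.sum_le_sum fun i _ => by
                  by_cases h1 : (i:ℕ) ≤ k <;> simp [h1, hd0]
            _ ≤ 1 := hcol j
        · simp [h2]
      rw [filter_le_card hl] at this
      calc _ ≤ (l:ℝ) + 1 := this
        _ ≤ min k l + 1 := by simp [min_eq_right h]
  calc α k * β l * (∑ i : Fin n, ∑ j : Fin n,
        if (i : ℕ) ≤ k ∧ (j : ℕ) ≤ l then d i j else 0)
      ≤ α k * β l * (((min k l : ℕ) : ℝ) + 1) :=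
        mul_le_mul_of_nonneg_left hTd (mul_nonneg (hα0 k) (hβ0 l))
    _ = _ := by rw [hTe]
lemma singularValues_nonneg {n : ℕ} (A : Matrix (Fin n) (Fin n) ℂ) (i : Fin n) :
    0 ≤ singularValues A i := Real.sqrt_nonneg _

lemma svd_exists {n : ℕ} (A : Matrix (Fin n) (Fin n) ℂ) :
    ∃ W U : Matrix (Fin n) (Fin n) ℂ,
      W ∈ Matrix.unitaryGroup (Fin n) ℂ ∧ U ∈ Matrix.unitaryGroup (Fin n) ℂ ∧
      A = W * Matrix.diagonal (fun i => (singularValues A i : ℂ)) * Uᴴ := by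
  classical
  set hH := (Matrix.posSemidef_conjTranspose_mul_self A).1 with hHdef
  set U : Matrix (Fin n) (Fin n) ℂ := (hH.eigenvectorUnitary : Matrix (Fin n) (Fin n) ℂ)
    with hUdef
  have hUmem : U ∈ Matrix.unitaryGroup (Fin n) ℂ := hH.eigenvectorUnitary.2
  have hU1 : Uᴴ * U = 1 := by
    simpa [Matrix.star_eq_conjTranspose] using (Matrix.mem_unitaryGroup_iff'.mp hUmem)
  have hU2 : U * Uᴴ = 1 := by
    simpa [Matrix.star_eq_conjTranspose] using (Matrix.mem_unitaryGroup_iff.mp hUmem)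
  set lam : Fin n → ℝ := hH.eigenvalues with hlam
  have hlam0 : ∀ i, 0 ≤ lam i :=
    (Matrix.posSemidef_conjTranspose_mul_self A).eigenvalues_nonneg
  have hσsq : ∀ i, (singularValues A i) ^ 2 = lam i := by
    intro i; exact Real.sq_sqrt (hlam0 i)
  set C : Matrix (Fin n) (Fin n) ℂ := A * U with hCdef
  have hCC : Cᴴ * C = Matrix.diagonal (fun i => (lam i : ℂ)) := by
    have hspec := hH.spectral_theorem
    calc Cᴴ * C = Uᴴ * (Aᴴ * A) * U := by
          rw [hCdef, Matrix.conjTranspose_mul]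
          noncomm_ring
      _ = Uᴴ * (U * Matrix.diagonal (RCLike.ofReal ∘ lam) * Uᴴ) * U := by
          rw [hspec]; rfl
      _ = (Uᴴ * U) * Matrix.diagonal (RCLike.ofReal ∘ lam) * (Uᴴ * U) := by
          noncomm_ring
      _ = Matrix.diagonal (fun i => (lam i : ℂ)) := by
          rw [hU1, one_mul, mul_one]; rfl
  -- columns of C
  set c : Fin n → EuclideanSpace ℂ (Fin n) := fun i => WithLp.toLp 2 (fun k => C k i) with hcdef
  have hinner : ∀ i j, @inner ℂ _ _ (c i) (c j) = if i = j then (lam i : ℂ) else 0 := by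
    intro i j
    have : (Cᴴ * C) i j = if i = j then (lam i : ℂ) else 0 := by
      rw [hCC]; by_cases h : i = j <;> simp [Matrix.diagonal, h]
    rw [← this]
    rw [Matrix.mul_apply]
    rw [PiLp.inner_apply]
    refine Finset.sum_congr rfl fun k _ => ?_
    simp [Matrix.conjTranspose_apply, RCLike.inner_apply, hcdef, mul_comm]
  set s : Set (Fin n) := {i | singularValues A i ≠ 0} with hsdef
  set v : Fin n → EuclideanSpace ℂ (Fin n) :=
    fun i => ((singularValues A i : ℂ))⁻¹ • c i with hvdef
  have hon : Orthonormal ℂ (s.restrict v) := by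
    rw [orthonormal_iff_ite]
    rintro ⟨i, hi⟩ ⟨j, hj⟩
    simp only [Set.restrict_apply, Set.restrict, hvdef, inner_smul_left, inner_smul_right, hinner i j]
    by_cases h : i = j
    · subst h
      have hσ : singularValues A i ≠ 0 := hi
      have hlc : (lam i : ℂ) = (singularValues A i : ℂ) ^ 2 := by
        rw [← hσsq i]; push_cast; ring
      simp only [if_pos rfl, if_true, hlc, map_inv₀, Complex.conj_ofReal]
      have hσc : (singularValues A i : ℂ) ≠ 0 := by
        simpa using hσ
      field_simp
    · simp [h, Subtype.ext_iff]
  obtain ⟨b, hb⟩ := hon.exists_orthonormalBasis_extension_of_card_eq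
    (by simp)
  set W : Matrix (Fin n) (Fin n) ℂ := Matrix.of (fun k i => b i k) with hWdef
  have hWmem : W ∈ Matrix.unitaryGroup (Fin n) ℂ := by
    rw [Matrix.mem_unitaryGroup_iff']
    ext i j
    rw [Matrix.mul_apply]
    have hbon := (orthonormal_iff_ite.mp b.orthonormal) i j
    rw [PiLp.inner_apply] at hbon
    simp only [RCLike.inner_apply] at hbon
    simp only [Matrix.star_eq_conjTranspose, Matrix.conjTranspose_apply, hWdef,
      Matrix.of_apply, Matrix.one_apply]
    simpa [mul_comm] using hbon
  have hCW : C = W * Matrix.diagonal (fun i => (singularValues A i : ℂ)) := by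
    ext k i
    rw [Matrix.mul_diagonal]
    by_cases hσ : singularValues A i = 0
    · have hlam_i : lam i = 0 := by rw [← hσsq i, hσ]; ring
      have hci : c i = 0 := by
        rw [← inner_self_eq_zero (𝕜 := ℂ)]
        rw [hinner i i, if_pos rfl, hlam_i]; simp
      have : C k i = 0 := by
        have := congrArg (fun x => x k) hci
        simpa [hcdef] using this
      rw [this, hσ]
      simp
    · have hbi : b i = v i := hb i hσ
      have hWki : W k i = ((singularValues A i : ℂ))⁻¹ * C k i := by
        rw [hWdef]
        simp only [Matrix.of_apply, hbi, hvdef]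
        rfl
      rw [hWki]
      have hσc : (singularValues A i : ℂ) ≠ 0 := by simpa using hσ
      field_simp
  refine ⟨W, U, hWmem, hUmem, ?_⟩
  calc A = A * (U * Uᴴ) := by rw [hU2, mul_one]
    _ = C * Uᴴ := by rw [hCdef]; noncomm_ring
    _ = W * Matrix.diagonal (fun i => (singularValues A i : ℂ)) * Uᴴ := by rw [hCW]

lemma abs_sq_row_sum {n : ℕ} (M : Matrix (Fin n) (Fin n) ℂ) (hM : M * Mᴴ = 1)
    (i : Fin n) : ∑ j : Fin n, ‖M i j‖ ^ 2 = 1 := by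
  have h : (M * Mᴴ) i i = 1 := by rw [hM]; simp [Matrix.one_apply]
  rw [Matrix.mul_apply] at h
  have h2 : ∑ j : Fin n, ((‖M i j‖ ^ 2 : ℝ) : ℂ) = 1 := by
    refine Eq.trans ?_ h
    refine Finset.sum_congr rfl fun j _ => ?_
    rw [Matrix.conjTranspose_apply]
    rw [show star (M i j) = (starRingEnd ℂ) (M i j) from rfl]
    rw [Complex.mul_conj, Complex.sq_norm]
  rw [← Complex.ofReal_sum] at h2
  exact_mod_cast h2

set_option maxHeartbeats 1000000 in
theorem vonNeumann_trace_inequality' {n : ℕ} (A B : Matrix (Fin n) (Fin n) ℂ)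
    (σA σB : Fin n → ℝ)
    (hA : IsSortedSingularValues A σA) (hB : IsSortedSingularValues B σB) :
    ‖(A * B).trace‖ ≤ ∑ i, σA i * σB i := by
  classical
  obtain ⟨hAanti, eA, hAe⟩ := hA
  obtain ⟨hBanti, eB, hBe⟩ := hB
  obtain ⟨W₁, U₁, hW₁, hU₁, hAsvd⟩ := svd_exists A
  obtain ⟨W₂, U₂, hW₂, hU₂, hBsvd⟩ := svd_exists B
  set sA : Fin n → ℝ := singularValues A with hsA
  set sB : Fin n → ℝ := singularValues B with hsB
  set P : Matrix (Fin n) (Fin n) ℂ := U₁ᴴ * W₂ with hP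
  set Q : Matrix (Fin n) (Fin n) ℂ := U₂ᴴ * W₁ with hQ
  have hU₁a : U₁ᴴ * U₁ = 1 := by
    simpa [Matrix.star_eq_conjTranspose] using Matrix.mem_unitaryGroup_iff'.mp hU₁
  have hU₁b : U₁ * U₁ᴴ = 1 := by
    simpa [Matrix.star_eq_conjTranspose] using Matrix.mem_unitaryGroup_iff.mp hU₁
  have hU₂a : U₂ᴴ * U₂ = 1 := by
    simpa [Matrix.star_eq_conjTranspose] using Matrix.mem_unitaryGroup_iff'.mp hU₂
  have hU₂b : U₂ * U₂ᴴ = 1 := by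
    simpa [Matrix.star_eq_conjTranspose] using Matrix.mem_unitaryGroup_iff.mp hU₂
  have hW₁a : W₁ᴴ * W₁ = 1 := by
    simpa [Matrix.star_eq_conjTranspose] using Matrix.mem_unitaryGroup_iff'.mp hW₁
  have hW₁b : W₁ * W₁ᴴ = 1 := by
    simpa [Matrix.star_eq_conjTranspose] using Matrix.mem_unitaryGroup_iff.mp hW₁
  have hW₂a : W₂ᴴ * W₂ = 1 := by
    simpa [Matrix.star_eq_conjTranspose] using Matrix.mem_unitaryGroup_iff'.mp hW₂
  have hW₂b : W₂ * W₂ᴴ = 1 := by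
    simpa [Matrix.star_eq_conjTranspose] using Matrix.mem_unitaryGroup_iff.mp hW₂
  have hPP : P * Pᴴ = 1 := by
    calc P * Pᴴ = U₁ᴴ * (W₂ * W₂ᴴ) * U₁ := by
          rw [hP, Matrix.conjTranspose_mul, Matrix.conjTranspose_conjTranspose]
          simp only [Matrix.mul_assoc]
      _ = 1 := by rw [hW₂b, mul_one, hU₁a]
  have hPPa : Pᴴ * P = 1 := by
    calc Pᴴ * P = W₂ᴴ * (U₁ * U₁ᴴ) * W₂ := by
          rw [hP, Matrix.conjTranspose_mul, Matrix.conjTranspose_conjTranspose]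
          simp only [Matrix.mul_assoc]
      _ = 1 := by rw [hU₁b, mul_one, hW₂a]
  have hQQ : Q * Qᴴ = 1 := by
    calc Q * Qᴴ = U₂ᴴ * (W₁ * W₁ᴴ) * U₂ := by
          rw [hQ, Matrix.conjTranspose_mul, Matrix.conjTranspose_conjTranspose]
          simp only [Matrix.mul_assoc]
      _ = 1 := by rw [hW₁b, mul_one, hU₂a]
  have hQQa : Qᴴ * Q = 1 := by
    calc Qᴴ * Q = W₁ᴴ * (U₂ * U₂ᴴ) * W₁ := by
          rw [hQ, Matrix.conjTranspose_mul, Matrix.conjTranspose_conjTranspose]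
          simp only [Matrix.mul_assoc]
      _ = 1 := by rw [hU₂b, mul_one, hW₁a]
  -- trace formula
  set DA : Matrix (Fin n) (Fin n) ℂ := Matrix.diagonal (fun i => (sA i : ℂ)) with hDA
  set DB : Matrix (Fin n) (Fin n) ℂ := Matrix.diagonal (fun i => (sB i : ℂ)) with hDB
  have hABform : A * B = W₁ * (DA * (P * (DB * U₂ᴴ))) := by
    rw [hAsvd, hBsvd, hP, hDA, hDB]
    simp only [Matrix.mul_assoc]
  have htrace1 : (A * B).trace = (DA * (P * (DB * Q))).trace := by
    rw [hABform, Matrix.trace_mul_comm, hQ]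
    congr 1
    simp only [Matrix.mul_assoc]
  have htr : (A * B).trace = ∑ i : Fin n, ∑ j : Fin n,
      (sA i : ℂ) * P i j * ((sB j : ℂ) * Q j i) := by
    rw [htrace1, Matrix.trace]
    refine Finset.sum_congr rfl fun i _ => ?_
    rw [Matrix.diag_apply, hDA, Matrix.diagonal_mul, Matrix.mul_apply, Finset.mul_sum]
    refine Finset.sum_congr rfl fun j _ => ?_
    rw [hDB, Matrix.diagonal_mul]
    ring
  -- entrywise absolute bound
  set d0 : Fin n → Fin n → ℝ :=
    fun i j => (‖P i j‖ ^ 2 + ‖Q j i‖ ^ 2) / 2 with hd0def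
  have hstep1 : ‖(A * B).trace‖ ≤
      ∑ i : Fin n, ∑ j : Fin n, sA i * sB j * d0 i j := by
    rw [htr]
    calc ‖∑ i : Fin n, ∑ j : Fin n,
          (sA i : ℂ) * P i j * ((sB j : ℂ) * Q j i)‖
        ≤ ∑ i : Fin n, ‖∑ j : Fin n,
          (sA i : ℂ) * P i j * ((sB j : ℂ) * Q j i)‖ := norm_sum_le _ _
      _ ≤ ∑ i : Fin n, ∑ j : Fin n, 
          ‖(sA i : ℂ) * P i j * ((sB j : ℂ) * Q j i)‖ :=
          Finset.sum_le_sum fun i _ => norm_sum_le _ _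
      _ ≤ ∑ i : Fin n, ∑ j : Fin n, sA i * sB j * d0 i j := by
          refine Finset.sum_le_sum fun i _ => Finset.sum_le_sum fun j _ => ?_
          rw [norm_mul, norm_mul, norm_mul, Complex.norm_real, Complex.norm_real,
            Real.norm_of_nonneg (singularValues_nonneg A i),
            Real.norm_of_nonneg (singularValues_nonneg B j)]
          have hab : ‖P i j‖ * ‖Q j i‖ ≤ d0 i j := by
            rw [hd0def]
            have := two_mul_le_add_sq (‖P i j‖) (‖Q j i‖)
            nlinarith [this]
          calc sA i * ‖P i j‖ * (sB j * ‖Q j i‖)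
              = sA i * sB j * (‖P i j‖ * ‖Q j i‖) := by ring
            _ ≤ sA i * sB j * d0 i j := by
                refine mul_le_mul_of_nonneg_left hab ?_
                exact mul_nonneg (singularValues_nonneg A i) (singularValues_nonneg B j)
  -- reindex by the sorting permutations
  have hreindex : ∑ i : Fin n, ∑ j : Fin n, sA i * sB j * d0 i j
      = ∑ i : Fin n, ∑ j : Fin n, σA i * σB j * d0 (eA i) (eB j) := by
    rw [← Equiv.sum_comp eA (fun i => ∑ j : Fin n, sA i * sB j * d0 i j)]
    refine Finset.sum_congr rfl fun i _ => ?_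
    rw [← Equiv.sum_comp eB (fun j => sA (eA i) * sB j * d0 (eA i) j)]
    refine Finset.sum_congr rfl fun j _ => ?_
    rw [hAe i, hBe j]
  -- row and column sums of d0 composed with the permutations
  have hProw : ∀ i : Fin n, ∑ j : Fin n, ‖P i j‖ ^ 2 = 1 :=
    abs_sq_row_sum P hPP
  have hPcol : ∀ j : Fin n, ∑ i : Fin n, ‖P i j‖ ^ 2 = 1 := by
    intro j
    have := abs_sq_row_sum Pᴴ (by rw [Matrix.conjTranspose_conjTranspose]; exact hPPa) j
    calc ∑ i : Fin n, ‖P i j‖ ^ 2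
        = ∑ i : Fin n, ‖Pᴴ j i‖ ^ 2 := by
          refine Finset.sum_congr rfl fun i _ => ?_
          rw [Matrix.conjTranspose_apply,
            show star (P i j) = (starRingEnd ℂ) (P i j) from rfl, Complex.norm_conj]
      _ = 1 := this
  have hQrow : ∀ i : Fin n, ∑ j : Fin n, ‖Q i j‖ ^ 2 = 1 :=
    abs_sq_row_sum Q hQQ
  have hQcol : ∀ j : Fin n, ∑ i : Fin n, ‖Q i j‖ ^ 2 = 1 := by
    intro j
    have := abs_sq_row_sum Qᴴ (by rw [Matrix.conjTranspose_conjTranspose]; exact hQQa) j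
    calc ∑ i : Fin n, ‖Q i j‖ ^ 2
        = ∑ i : Fin n, ‖Qᴴ j i‖ ^ 2 := by
          refine Finset.sum_congr rfl fun i _ => ?_
          rw [Matrix.conjTranspose_apply,
            show star (Q i j) = (starRingEnd ℂ) (Q i j) from rfl, Complex.norm_conj]
      _ = 1 := this
  -- apply the rearrangement bound
  have hfinal : ∑ i : Fin n, ∑ j : Fin n, σA i * σB j * d0 (eA i) (eB j)
      ≤ ∑ i : Fin n, σA i * σB i := by
    refine ds_bound σA σB hAanti hBanti
      (fun i => by rw [hAe i]; exact singularValues_nonneg A _)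
      (fun i => by rw [hBe i]; exact singularValues_nonneg B _)
      (fun i j => d0 (eA i) (eB j))
      (fun i j => by positivity) ?_ ?_
    · intro i
      rw [Equiv.sum_comp eB (fun j => d0 (eA i) j)]
      rw [hd0def]
      simp only
      rw [← Finset.sum_div, Finset.sum_add_distrib, hProw (eA i), hQcol (eA i)]
      norm_num
    · intro j
      rw [Equiv.sum_comp eA (fun i => d0 i (eB j))]
      rw [hd0def]
      simp only
      rw [← Finset.sum_div, Finset.sum_add_distrib, hPcol (eB j), hQrow (eB j)]
      norm_num
  calc ‖(A * B).trace‖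
      ≤ ∑ i : Fin n, ∑ j : Fin n, sA i * sB j * d0 i j := hstep1
    _ = ∑ i : Fin n, ∑ j : Fin n, σA i * σB j * d0 (eA i) (eB j) := hreindex
    _ ≤ ∑ i : Fin n, σA i * σB i := hfinal

end Helpers

/-- Von Neumann's trace inequality: `|tr (A * B)| ≤ ∑ i, σᵢ(A) * σᵢ(B)`, where
`σ₁(M) ≥ ⋯ ≥ σₙ(M)` are the decreasingly ordered singular values. -/
theorem vonNeumann_trace_inequality {n : ℕ} (A B : Matrix (Fin n) (Fin n) ℂ)
    (σA σB : Fin n → ℝ)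
    (hA : IsSortedSingularValues A σA) (hB : IsSortedSingularValues B σB) :
    ‖(A * B).trace‖ ≤ ∑ i, σA i * σB i := by
  exact vonNeumann_trace_inequality' A B σA σB hA hB
end

section
/- Let Λ = diag(λ, 0, …, 0) be a K×K diagonal matrix with a single (possibly) nonzero entry λ ∈ ℂ, let c' ∈ ℂ^K be a row vector and c ∈ ℂ^K a column vector with c'ᵀ c = 1, and let θ ∈ ℂ with |θ| = 1 and 1 + θλ ≠ 0. Then det(I_K + θΛ + θ* λ* c c'ᵀ) = 1 + |λ|² (1 − c'₁ c₁) + 2 Re(θλ), where c'₁ and c₁ are the first entries of c' and c. -/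
open Matrix


/-- Appendix B determinant identity: with `Λ = diag(λ, 0, …, 0)`, `c'ᵀ c = 1`,
`|θ| = 1` and `1 + θλ ≠ 0`,
`det(I + θΛ + θ* λ* c c'ᵀ) = 1 + |λ|² (1 - c'₁ c₁) + 2 Re(θλ)`. -/
theorem det_one_add_smul_diag_add_outer {K : ℕ} (lam : ℂ) (c' c : Fin (K + 1) → ℂ)
    (hcc : ∑ i, c' i * c i = 1) (θ : ℂ) (hθ : ‖θ‖ = 1)
    (h1 : 1 + θ * lam ≠ 0) :
    Matrix.det
        (1 + θ • Matrix.diagonal (fun i => if i = 0 then lam else 0) +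
          (starRingEnd ℂ θ * starRingEnd ℂ lam) • Matrix.of fun i j => c i * c' j) =
      1 + ((‖lam‖ : ℂ)) ^ 2 * (1 - c' 0 * c 0) + 2 * ((θ * lam).re : ℂ) := by
  set a := θ * lam with ha
  set s := starRingEnd ℂ θ * starRingEnd ℂ lam with hs
  have hsa : s = starRingEnd ℂ a := by simp [hs, ha, mul_comm]
  set d : Fin (K + 1) → ℂ := fun i => if i = 0 then 1 + a else 1 with hd
  have hdne : ∀ i, d i ≠ 0 := by
    intro i; by_cases h : i = 0 <;> simp [hd, h, h1]
  set u : Fin (K + 1) → ℂ := fun i => s / d i * c i with hu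
  have hfac :
      (1 + θ • Matrix.diagonal (fun i => if i = 0 then lam else 0) +
          s • Matrix.of fun i j => c i * c' j) =
        Matrix.diagonal d * (1 + Matrix.replicateCol (Fin 1) u * Matrix.replicateRow (Fin 1) c') := by
    ext i j
    rw [Matrix.diagonal_mul]
    simp only [Matrix.add_apply, Matrix.smul_apply, Matrix.of_apply, Matrix.mul_apply,
      Matrix.replicateCol_apply, Matrix.replicateRow_apply, Matrix.one_apply, Matrix.diagonal_apply, hu,
      Finset.sum_const, Finset.card_univ, Fintype.card_fin, one_smul, smul_eq_mul]
    by_cases hij : i = j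
    · subst hij
      by_cases h0 : i = 0
      · simp only [h0, hd, if_pos rfl, if_true]
        field_simp
        ring
      · simp only [hd, if_neg h0, if_pos rfl, if_true]
        field_simp
        ring
    · simp only [if_neg hij]
      by_cases h0 : i = 0
      · simp only [h0, hd, if_pos rfl]
        field_simp
        ring
      · simp only [hd, if_neg h0]
        field_simp
        ring
  rw [hfac, Matrix.det_mul, show Matrix.det (1 + Matrix.replicateCol (Fin 1) u * Matrix.replicateRow (Fin 1) c' :
      Matrix (Fin (K + 1)) (Fin (K + 1)) ℂ) = 1 + c' ⬝ᵥ u from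
    Matrix.det_one_add_replicateCol_mul_replicateRow u c', Matrix.det_diagonal]
  have hprod : (∏ i, d i) = 1 + a := by simp [hd]
  have hdot : c' ⬝ᵥ u = s + (s / (1 + a) - s) * (c' 0 * c 0) := by
    have key : ∀ i, c' i * u i =
        s * (c' i * c i) + (if i = 0 then (s / (1 + a) - s) * (c' 0 * c 0) else 0) := by
      intro i
      by_cases h : i = 0
      · subst h; simp only [hu, hd, if_pos rfl, if_true]; ring
      · simp only [hu, hd, if_neg h]; simp; ring
    rw [dotProduct, Finset.sum_congr rfl fun i _ => key i, Finset.sum_add_distrib,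
      ← Finset.mul_sum, hcc, Finset.sum_ite_eq' Finset.univ 0]
    simp
  rw [hprod, hdot]
  have hsa2 : s * a = ((‖lam‖ : ℂ)) ^ 2 := by
    rw [hsa, Complex.conj_mul', ha, norm_mul, hθ, one_mul]
  have hre : a + s = 2 * ((a.re : ℂ)) := by
    rw [hsa, Complex.add_conj]; push_cast; ring
  have expand : (1 + a) * (1 + (s + (s / (1 + a) - s) * (c' 0 * c 0))) =
      (1 + a) * (1 + s) - s * a * (c' 0 * c 0) := by
    field_simp; ring
  rw [expand]
  linear_combination hre + (1 - c' 0 * c 0) * hsa2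
end
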